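/- arXiv:1811.06741 — 5 statements merged into one kernel-verified Lean document; each statement's English description precedes it below -/
import Mathlib

section
/- Consider the discrete-time NIMFA model v_i[k+1] = (1−δ_T)v_i[k] + β_T(1−v_i[k])Σⱼ a_{ij} v_j[k] with a steady state v∞ satisfying the fixed-point equation, viral states v_i[k] ∈ [0,1] for all i and k, and suppose δ_T + β_T d_i ≤ 1 for every node i, where d_i = Σⱼ a_{ij}. If v_i[0] ≤ v∞ᵢ for every node i, then v_i[k] ≤ v∞ᵢ for every node i and every time k ≥ 0. -/
/-! On the box `x ≤ 1` the NIMFA update is monotone: the difference of two updates is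
`(1 - δ - β (A x)ᵢ) (xᵢ - yᵢ) + β (1 - yᵢ) (A (x - y))ᵢ`, whose first coefficient is
nonnegative because `(A x)ᵢ ≤ dᵢ` and `δ + β dᵢ ≤ 1`, and whose second is nonnegative as
`yᵢ ≤ 1`. Since `v∞` is a fixed point of the update, induction on `k` keeps the trajectory
below it. -/

open Finset

section NimfaStep

variable {ι : Type*} [Fintype ι]

def nimfaStep (a : ι → ι → ℝ) (β δ : ℝ) (x : ι → ℝ) : ι → ℝ :=
  fun i => (1 - δ) * x i + β * (1 - x i) * ∑ j, a i j * x j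

theorem nimfaStep_sub_nimfaStep (a : ι → ι → ℝ) (β δ : ℝ) (x y : ι → ℝ) (i : ι) :
    nimfaStep a β δ x i - nimfaStep a β δ y i =
      (1 - δ - β * ∑ j, a i j * x j) * (x i - y i)
        + β * (1 - y i) * ∑ j, a i j * (x j - y j) := by
  simp only [nimfaStep, mul_sub, sum_sub_distrib]
  ring

theorem nimfaStep_monotoneOn {a : ι → ι → ℝ} {β δ : ℝ} (ha : ∀ i j, 0 ≤ a i j) (hβ : 0 ≤ β)
    (hT : ∀ i, δ + β * ∑ j, a i j ≤ 1) :
    MonotoneOn (nimfaStep a β δ) (Set.Iic 1) := by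
  intro x hx y hy hxy i
  have hAx : ∑ j, a i j * x j ≤ ∑ j, a i j :=
    sum_le_sum fun j _ => mul_le_of_le_one_right (ha i j) (hx j)
  have hcoeff : 0 ≤ 1 - δ - β * ∑ j, a i j * x j := by
    nlinarith [hT i, mul_le_mul_of_nonneg_left hAx hβ]
  have hAxy : ∑ j, a i j * (x j - y j) ≤ 0 :=
    sum_nonpos fun j _ => mul_nonpos_of_nonneg_of_nonpos (ha i j) (sub_nonpos.2 (hxy j))
  have hdiff := nimfaStep_sub_nimfaStep a β δ x y i
  have hy' : 0 ≤ β * (1 - y i) := mul_nonneg hβ (sub_nonneg.2 (hy i))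
  nlinarith [mul_nonpos_of_nonneg_of_nonpos hcoeff (sub_nonpos.2 (hxy i)),
    mul_nonpos_of_nonneg_of_nonpos hy' hAxy]

end NimfaStep

theorem nimfa_below_steady_state_general
    (N : ℕ) (a : Fin N → Fin N → ℝ) (ha : ∀ i j, a i j = 0 ∨ a i j = 1)
    (βT δT : ℝ) (hβ : 0 < βT)
    (vinf : Fin N → ℝ) (hvinf : ∀ i, 0 ≤ vinf i ∧ vinf i < 1)
    (hfix : ∀ i, vinf i = (1 - δT) * vinf i
      + βT * (1 - vinf i) * ∑ j, a i j * vinf j)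
    (v : ℕ → Fin N → ℝ)
    (hv : ∀ k i, v (k + 1) i = (1 - δT) * v k i
      + βT * (1 - v k i) * ∑ j, a i j * v k j)
    (hbox : ∀ k i, v k i ∈ Set.Icc (0 : ℝ) 1)
    (hT : ∀ i, δT + βT * ∑ j, a i j ≤ 1)
    (hinit : ∀ i, v 0 i ≤ vinf i) :
    ∀ k i, v k i ≤ vinf i := by
  have ha_nonneg : ∀ i j, 0 ≤ a i j := fun i j => by rcases ha i j with h | h <;> simp [h]
  have hmono := nimfaStep_monotoneOn ha_nonneg hβ.le hT
  have hvinf_le : vinf ∈ Set.Iic 1 := fun i => (hvinf i).2.le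
  intro k
  induction k with
  | zero => exact hinit
  | succ k ih =>
    calc v (k + 1) = nimfaStep a βT δT (v k) := funext (hv k)
      _ ≤ nimfaStep a βT δT vinf := hmono (fun i => (hbox k i).2) hvinf_le ih
      _ = vinf := (funext hfix).symm

theorem nimfa_below_steady_state
    (N : ℕ) (a : Fin N → Fin N → ℝ) (ha : ∀ i j, a i j = 0 ∨ a i j = 1)
    (βT δT : ℝ) (hβ : 0 < βT) (hδ : 0 ≤ δT)
    (vinf : Fin N → ℝ) (hvinf : ∀ i, 0 ≤ vinf i ∧ vinf i < 1)
    (hfix : ∀ i, vinf i = (1 - δT) * vinf i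
      + βT * (1 - vinf i) * ∑ j, a i j * vinf j)
    (v : ℕ → Fin N → ℝ)
    (hv : ∀ k i, v (k + 1) i = (1 - δT) * v k i
      + βT * (1 - v k i) * ∑ j, a i j * v k j)
    (hbox : ∀ k i, v k i ∈ Set.Icc (0 : ℝ) 1)
    (hT : ∀ i, δT + βT * ∑ j, a i j ≤ 1)
    (hinit : ∀ i, v 0 i ≤ vinf i) :
    ∀ k i, v k i ≤ vinf i :=
  nimfa_below_steady_state_general N a ha βT δT hβ vinf hvinf hfix v hv hbox hT hinit
end

section
/- Under the same hypotheses (δ_T + β_T d_i ≤ 1 for all i, v_i[k] ∈ [0,1] for all i and k, v∞ a fixed point of the NIMFA map with v∞ᵢ < 1), if v_i[0] ≥ v∞ᵢ for every node i, then v_i[k] ≥ v∞ᵢ for every node i and every time k ≥ 0. -/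
/-!
When `δ_T + β_T d_i ≤ 1` the NIMFA map `f` is monotone on `{x ≤ 1}`: every
coefficient in the expansion of `f(x) - f(y)` in the differences `x_j - y_j` is nonnegative.
Since `v∞` is a fixed point, `v∞ ≤ v[k]` gives `v∞ = f(v∞) ≤ f(v[k]) = v[k+1]`.
-/

open Finset

variable {N : ℕ}

def nimfaMap (a : Fin N → Fin N → ℝ) (βT δT : ℝ) (x : Fin N → ℝ) : Fin N → ℝ :=
  fun i => (1 - δT) * x i + βT * (1 - x i) * ∑ j, a i j * x j

section

variable (a : Fin N → Fin N → ℝ) (βT δT : ℝ)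

theorem nimfaMap_sub (x y : Fin N → ℝ) (i : Fin N) :
    nimfaMap a βT δT x i - nimfaMap a βT δT y i
      = (1 - δT - βT * ∑ j, a i j * y j) * (x i - y i)
        + βT * (1 - x i) * ∑ j, a i j * (x j - y j) := by
  simp only [nimfaMap, mul_sub, Finset.sum_sub_distrib]
  ring

variable {a βT δT}

theorem one_sub_sub_mul_sum_nonneg (ha : ∀ i j, 0 ≤ a i j) (hβ : 0 ≤ βT)
    (hT : ∀ i, δT + βT * ∑ j, a i j ≤ 1) {y : Fin N → ℝ} (hy : y ≤ 1) (i : Fin N) :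
    0 ≤ 1 - δT - βT * ∑ j, a i j * y j := by
  have hsum : ∑ j, a i j * y j ≤ ∑ j, a i j :=
    Finset.sum_le_sum fun j _ => mul_le_of_le_one_right (ha i j) (hy j)
  nlinarith [hT i, mul_le_mul_of_nonneg_left hsum hβ]

theorem nimfaMap_monotoneOn (ha : ∀ i j, 0 ≤ a i j) (hβ : 0 ≤ βT)
    (hT : ∀ i, δT + βT * ∑ j, a i j ≤ 1) :
    MonotoneOn (nimfaMap a βT δT) (Set.Iic 1) := by
  intro y hy x hx hyx i
  have hdiff : 0 ≤ ∑ j, a i j * (x j - y j) :=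
    Finset.sum_nonneg fun j _ => mul_nonneg (ha i j) (sub_nonneg.2 (hyx j))
  have hxi : 0 ≤ 1 - x i := sub_nonneg.2 (hx i)
  have := nimfaMap_sub a βT δT x y i
  nlinarith [mul_nonneg (one_sub_sub_mul_sum_nonneg ha hβ hT hy i) (sub_nonneg.2 (hyx i)),
    mul_nonneg (mul_nonneg hβ hxi) hdiff]

end

theorem nimfa_above_steady_state_general
    (N : ℕ) (a : Fin N → Fin N → ℝ) (ha : ∀ i j, a i j = 0 ∨ a i j = 1)
    (βT δT : ℝ) (hβ : 0 < βT)
    (vinf : Fin N → ℝ) (hvinf : ∀ i, 0 ≤ vinf i ∧ vinf i < 1)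
    (hfix : ∀ i, vinf i = (1 - δT) * vinf i
      + βT * (1 - vinf i) * ∑ j, a i j * vinf j)
    (v : ℕ → Fin N → ℝ)
    (hv : ∀ k i, v (k + 1) i = (1 - δT) * v k i
      + βT * (1 - v k i) * ∑ j, a i j * v k j)
    (hbox : ∀ k i, v k i ∈ Set.Icc (0 : ℝ) 1)
    (hT : ∀ i, δT + βT * ∑ j, a i j ≤ 1)
    (hinit : ∀ i, vinf i ≤ v 0 i) :
    ∀ k i, vinf i ≤ v k i := by
  have ha0 : ∀ i j, 0 ≤ a i j := fun i j => by rcases ha i j with h | h <;> simp [h]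
  have hmono := nimfaMap_monotoneOn ha0 hβ.le hT
  have hvinf1 : vinf ∈ Set.Iic 1 := fun i => (hvinf i).2.le
  have hfix' : nimfaMap a βT δT vinf = vinf := funext fun i => (hfix i).symm
  intro k
  induction k with
  | zero => exact hinit
  | succ k ih =>
    calc vinf = nimfaMap a βT δT vinf := hfix'.symm
      _ ≤ nimfaMap a βT δT (v k) := hmono hvinf1 (fun i => (hbox k i).2) ih
      _ = v (k + 1) := funext fun i => (hv k i).symm

theorem nimfa_above_steady_state
    (N : ℕ) (a : Fin N → Fin N → ℝ) (ha : ∀ i j, a i j = 0 ∨ a i j = 1)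
    (βT δT : ℝ) (hβ : 0 < βT) (hδ : 0 ≤ δT)
    (vinf : Fin N → ℝ) (hvinf : ∀ i, 0 ≤ vinf i ∧ vinf i < 1)
    (hfix : ∀ i, vinf i = (1 - δT) * vinf i
      + βT * (1 - vinf i) * ∑ j, a i j * vinf j)
    (v : ℕ → Fin N → ℝ)
    (hv : ∀ k i, v (k + 1) i = (1 - δT) * v k i
      + βT * (1 - v k i) * ∑ j, a i j * v k j)
    (hbox : ∀ k i, v k i ∈ Set.Icc (0 : ℝ) 1)
    (hT : ∀ i, δT + βT * ∑ j, a i j ≤ 1)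
    (hinit : ∀ i, vinf i ≤ v 0 i) :
    ∀ k i, vinf i ≤ v k i :=
  nimfa_above_steady_state_general N a ha βT δT hβ vinf hvinf hfix v hv hbox hT hinit
end

section
/- Let the n×p measurement matrix X satisfy the restricted isometry property of order 2s with constant δ_{2s} < √2 − 1, and suppose the parameter vector α ∈ ℝ^p is s-sparse and y = Xα. Then the unique solution of the basis pursuit problem min ‖z‖₁ subject to y = Xz is z = α (exact recovery). -/
/-!
Put `h = z - α` and let `T` be the support of `α`. Then `X h = 0`, and `‖z‖₁ ≤ ‖α‖₁` puts `h` in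
the cone `‖h_{Tᶜ}‖₁ ≤ ‖h_T‖₁`. Cut `Tᶜ` into blocks `T₁, T₂, …` of size `s` along decreasing `|h|`:
every entry of `T_{j+1}` is at most the mean of `|h|` on `T_j`, so
`∑_{j ≥ 2} ‖h_{T_j}‖₂ ≤ s^{-1/2} ‖h_{Tᶜ}‖₁ ≤ s^{-1/2} ‖h_T‖₁ ≤ ‖h_T‖₂`.
By the RIP, `‖X h_{T ∪ T₁}‖₂²` is at least `(1 - δ) ‖h_{T ∪ T₁}‖₂²`; on the other hand
`X h_{T ∪ T₁} = -∑_{j ≥ 2} X h_{T_j}`, and the RIP makes `X` map disjointly supported sparse vectors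
to nearly orthogonal ones, which bounds the same quantity by `√2 δ ‖h_{T ∪ T₁}‖₂ ‖h_T‖₂`.
Since `1 - δ > √2 δ`, `h_T = 0`, and the cone then forces `h = 0`.
-/

open Finset Matrix

section

variable {ι κ : Type*}

theorem Finset.sum_abs_compl_le_of_sum_abs_add_le [Fintype ι] [DecidableEq ι] {T : Finset ι}
    {α h : ι → ℝ} (hα : ∀ i ∉ T, α i = 0) (hmin : ∑ i, |α i + h i| ≤ ∑ i, |α i|) :
    ∑ i ∈ Tᶜ, |h i| ≤ ∑ i ∈ T, |h i| := by
  have hαT : ∑ i, |α i| = ∑ i ∈ T, |α i| :=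
    (sum_subset (subset_univ T) fun i _ hi => by rw [hα i hi, abs_zero]).symm
  have hcompl : ∑ i ∈ Tᶜ, |α i + h i| = ∑ i ∈ Tᶜ, |h i| :=
    sum_congr rfl fun i hi => by rw [hα i (mem_compl.1 hi), zero_add]
  have htri : ∑ i ∈ T, |α i| ≤ ∑ i ∈ T, |α i + h i| + ∑ i ∈ T, |h i| := by
    rw [← sum_add_distrib]
    exact sum_le_sum fun i _ => by simpa using abs_sub (α i + h i) (h i)
  rw [← sum_add_sum_compl T, hcompl, hαT] at hmin
  linarith

theorem Finset.exists_subset_card_eq_forall_le [DecidableEq ι] {β : Type*} [LinearOrder β]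
    (f : ι → β) {R : Finset ι} {n : ℕ} (hn : n ≤ #R) :
    ∃ U ⊆ R, #U = n ∧ ∀ x ∈ R \ U, ∀ y ∈ U, f x ≤ f y := by
  induction n with
  | zero => exact ⟨∅, empty_subset R, card_empty, by simp⟩
  | succ n ih =>
    obtain ⟨U, hUR, hU, hUtop⟩ := ih (by omega)
    obtain ⟨m, hm, hmax⟩ := (R \ U).exists_max_image f <| by
      rw [← card_pos, card_sdiff_of_subset hUR]; omega
    have hmU : m ∉ U := (mem_sdiff.1 hm).2
    refine ⟨insert m U, insert_subset (mem_sdiff.1 hm).1 hUR,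
      by rw [card_insert_of_notMem hmU, hU], fun x hx y hy => ?_⟩
    have hxU : x ∈ R \ U := by
      simp only [mem_sdiff, mem_insert, not_or] at hx ⊢; exact ⟨hx.1, hx.2.2⟩
    rcases mem_insert.1 hy with rfl | hy
    · exact hmax x hxU
    · exact hUtop x hxU y hy

/-- `k i` is the block of `i`: peeling off the `s` largest values of `f` again and again replaces
sorting `R` by decreasing `f` and cutting it into consecutive pieces of length `s`. -/
theorem Finset.exists_block_labeling [DecidableEq ι] (f : ι → ℝ) (R : Finset ι) {s : ℕ}
    (hs : 0 < s) :
    ∃ k : ι → ℕ, (∀ j, #{i ∈ R | k i = j} ≤ s) ∧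
      ∀ x ∈ R, ∀ j, k x = j + 1 → s * f x ≤ ∑ y ∈ R with k y = j, f y := by
  induction R using Finset.strongInduction with
  | H R ih =>
  by_cases hR : #R ≤ s
  · exact ⟨fun _ => 0, fun j => (card_filter_le _ _).trans hR, fun x _ j hx => by simp at hx⟩
  obtain ⟨U, hUR, hU, hUtop⟩ := exists_subset_card_eq_forall_le f (R := R) (n := s) (by omega)
  obtain ⟨k, hk_card, hk_le⟩ :=
    ih (R \ U) (sdiff_ssubset hUR (by rw [← card_pos, hU]; exact hs))
  set k' : ι → ℕ := fun i => if i ∈ U then 0 else k i + 1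
  have hfiber_zero : {i ∈ R | k' i = 0} = U := by
    ext i
    by_cases hi : i ∈ U
    · simp [k', hi, hUR hi]
    · simp [k', hi]
  have hfiber_succ (j : ℕ) : {i ∈ R | k' i = j + 1} = {i ∈ R \ U | k i = j} := by
    ext i
    by_cases hi : i ∈ U <;> simp [k', hi]
  refine ⟨k', fun j => ?_, fun x hxR j hxj => ?_⟩
  · cases j with
    | zero => rw [hfiber_zero, hU]
    | succ j => rw [hfiber_succ]; exact hk_card j
  have hxU : x ∉ U := fun hxU => by simp [k', hxU] at hxj
  have hx : x ∈ R \ U := mem_sdiff.2 ⟨hxR, hxU⟩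
  have hkx : k x = j := by simpa [k', hxU] using hxj
  cases j with
  | zero =>
    rw [hfiber_zero, ← hU, ← nsmul_eq_mul]
    exact card_nsmul_le_sum U f (f x) (hUtop x hx)
  | succ j => rw [hfiber_succ]; exact hk_le x hx j hkx

theorem Finset.indicator_eq_sum_indicator_fiberwise {M : Type*} [AddCommMonoid M]
    [DecidableEq ι] {R : Finset ι} {k : ι → ℕ} {t : Finset ℕ} (hk : ∀ i ∈ R, k i ∈ t)
    (f : ι → M) :
    (R : Set ι).indicator f = ∑ j ∈ t, (({i ∈ R | k i = j} : Finset ι) : Set ι).indicator f := by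
  ext i
  rw [Finset.sum_apply]
  by_cases hi : i ∈ R
  · rw [sum_eq_single_of_mem (k i) (hk i hi) fun j _ hj => ?_]
    · simp [hi]
    · simp [Ne.symm hj]
  · simp [hi]

theorem Finset.mul_sum_sq_le_sq {B : Finset ι} {s : ℕ} (hB : #B ≤ s) (h : ι → ℝ) {L : ℝ}
    (hL : ∀ x ∈ B, s * |h x| ≤ L) : s * ∑ i ∈ B, h i ^ 2 ≤ L ^ 2 := by
  rcases Nat.eq_zero_or_pos s with rfl | hs
  · simp [sq_nonneg]
  have hs' : (0 : ℝ) < s := Nat.cast_pos.2 hs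
  have hx : ∀ x ∈ B, h x ^ 2 ≤ (L / s) ^ 2 := fun x hx => by
    rw [← sq_abs]
    exact pow_le_pow_left₀ (abs_nonneg _) ((le_div_iff₀' hs').2 (hL x hx)) 2
  calc s * ∑ i ∈ B, h i ^ 2
      ≤ s * (#B • (L / s) ^ 2) := by gcongr; exact sum_le_card_nsmul B _ _ hx
    _ ≤ s * (s * (L / s) ^ 2) := by rw [nsmul_eq_mul]; gcongr
    _ = L ^ 2 := by field_simp

theorem Finset.sqrt_mul_sum_sqrt_sum_sq_le {R : Finset ι} {s : ℕ} (h : ι → ℝ) {k : ι → ℕ}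
    (hk_card : ∀ j, #{i ∈ R | k i = j} ≤ s)
    (hk_le : ∀ x ∈ R, ∀ j, k x = j + 1 → s * |h x| ≤ ∑ y ∈ R with k y = j, |h y|) (M : ℕ) :
    √s * ∑ j ∈ range M, √(∑ i ∈ R with k i = j + 1, h i ^ 2) ≤ ∑ i ∈ R, |h i| := by
  have hblock (j : ℕ) :
      √s * √(∑ i ∈ R with k i = j + 1, h i ^ 2) ≤ ∑ i ∈ R with k i = j, |h i| := by
    rw [← Real.sqrt_mul (Nat.cast_nonneg s)]
    refine Real.sqrt_le_iff.2
      ⟨sum_nonneg fun i _ => abs_nonneg _, mul_sum_sq_le_sq (hk_card _) h fun x hx => ?_⟩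
    exact hk_le x (mem_filter.1 hx).1 j (mem_filter.1 hx).2
  calc √s * ∑ j ∈ range M, √(∑ i ∈ R with k i = j + 1, h i ^ 2)
      ≤ ∑ j ∈ range M, ∑ i ∈ R with k i = j, |h i| := by
        rw [mul_sum]; exact sum_le_sum fun j _ => hblock j
    _ ≤ ∑ i ∈ R, |h i| :=
      sum_fiberwise_le_sum_of_sum_fiber_nonneg fun j _ => sum_nonneg fun i _ => abs_nonneg _

theorem Finset.sum_abs_le_sqrt_mul_sqrt_sum_sq {T : Finset ι} {s : ℕ} (hT : #T ≤ s)
    (h : ι → ℝ) : ∑ i ∈ T, |h i| ≤ √s * √(∑ i ∈ T, h i ^ 2) := by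
  rw [← Real.sqrt_mul (Nat.cast_nonneg s)]
  refine Real.le_sqrt_of_sq_le (sq_sum_le_card_mul_sum_sq.trans ?_)
  simp only [sq_abs]
  gcongr

variable [Fintype ι] [Fintype κ]

theorem Finset.sum_indicator_sq (S : Finset ι) (u : ι → ℝ) :
    ∑ i, (S : Set ι).indicator u i ^ 2 = ∑ i ∈ S, u i ^ 2 := by
  classical
  simp [Set.indicator_apply]

theorem Finset.card_indicator_ne_zero_le (S : Finset ι) (u : ι → ℝ) :
    #{i | (S : Set ι).indicator u i ≠ 0} ≤ #S :=
  card_le_card fun i hi => by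
    by_contra hiS
    simp [Set.indicator_of_notMem (mt Finset.mem_coe.1 hiS)] at hi

theorem sum_sq_eq_dotProduct_self (v : κ → ℝ) : ∑ i, v i ^ 2 = v ⬝ᵥ v := by
  simp [dotProduct, sq]

theorem sum_sq_eq_zero_iff (v : κ → ℝ) : ∑ i, v i ^ 2 = 0 ↔ v = 0 := by
  rw [sum_sq_eq_dotProduct_self, dotProduct_self_eq_zero]

theorem eq_zero_of_one_sub_mul_le_of_lt_sqrt_two_sub_one {a b C δ : ℝ} (ha : 0 ≤ a)
    (hb : 0 ≤ b) (hC : 0 ≤ C) (hCa : C ≤ a) (hδ : δ < √2 - 1)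
    (h : (1 - δ) * (a ^ 2 + b ^ 2) ≤ δ * (a + b) * C) : a = 0 := by
  have hr : √2 ^ 2 = 2 := Real.sq_sqrt zero_le_two
  have hr' : 1 < √2 := by nlinarith [Real.sqrt_nonneg 2]
  have hgap : 0 < 1 - δ * (1 + √2) := by nlinarith
  have hquad : (a + b) * a ≤ √2 * (a ^ 2 + b ^ 2) := by
    have key : 2 * (√2 - 1) * (√2 * (a ^ 2 + b ^ 2) - (a + b) * a)
        = ((√2 - 1) * a - b) ^ 2 + (3 - 2 * √2) * (a ^ 2 + b ^ 2) := by
      linear_combination (a ^ 2 + 2 * b ^ 2) * hr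
    have h32 : 0 ≤ 3 - 2 * √2 := by nlinarith
    nlinarith [sq_nonneg ((√2 - 1) * a - b),
      mul_nonneg h32 (add_nonneg (sq_nonneg a) (sq_nonneg b))]
  have hA : a ^ 2 + b ^ 2 ≤ 0 := by
    rcases le_or_gt 0 δ with hδ0 | hδ0
    · nlinarith [mul_le_mul_of_nonneg_left hCa (mul_nonneg hδ0 (add_nonneg ha hb))]
    · nlinarith [mul_nonneg (add_nonneg ha hb) hC]
  nlinarith

def Matrix.IsRestrictedIsometry (X : Matrix κ ι ℝ) (k : ℕ) (δ : ℝ) : Prop :=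
  ∀ z : ι → ℝ, #{i | z i ≠ 0} ≤ k →
    (1 - δ) * ∑ i, z i ^ 2 ≤ ∑ i, (X *ᵥ z) i ^ 2 ∧ ∑ i, (X *ᵥ z) i ^ 2 ≤ (1 + δ) * ∑ i, z i ^ 2

namespace Matrix.IsRestrictedIsometry

variable {X : Matrix κ ι ℝ} {k s : ℕ} {δ : ℝ}

theorem two_mul_mul_dotProduct_le (hX : X.IsRestrictedIsometry k δ) {S T : Finset ι}
    (hST : Disjoint S T) (hk : #S + #T ≤ k) (u v : ι → ℝ) (a b : ℝ) :
    2 * (a * b) * (X *ᵥ (S : Set ι).indicator u ⬝ᵥ X *ᵥ (T : Set ι).indicator v)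
      ≤ δ * (a ^ 2 * ∑ i ∈ S, u i ^ 2 + b ^ 2 * ∑ i ∈ T, v i ^ 2) := by
  classical
  set u' := (S : Set ι).indicator u
  set v' := (T : Set ι).indicator v
  have hu'v' : ∀ i, u' i * v' i = 0 := fun i => by
    by_cases hi : i ∈ S
    · simp [v', Set.indicator_of_notMem (Finset.disjoint_left.1 hST hi)]
    · simp [u', hi]
  have hRIP (b : ℝ) := hX (a • u' + b • v') <| by
    refine (card_le_card fun i hi => ?_).trans ((card_union_le S T).trans hk)
    by_contra hiST
    simp only [mem_union, not_or] at hiST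
    simp [u', v', hiST.1, hiST.2] at hi
  have hnorm (b : ℝ) : ∑ i, (a • u' + b • v') i ^ 2
      = a ^ 2 * ∑ i ∈ S, u i ^ 2 + b ^ 2 * ∑ i ∈ T, v i ^ 2 := by
    rw [← S.sum_indicator_sq, ← T.sum_indicator_sq, mul_sum, mul_sum, ← sum_add_distrib]
    refine sum_congr rfl fun i _ => ?_
    simp only [Pi.add_apply, Pi.smul_apply, smul_eq_mul]
    linear_combination 2 * a * b * hu'v' i
  have himage (b : ℝ) : ∑ i, (X *ᵥ (a • u' + b • v')) i ^ 2
      = a ^ 2 * (X *ᵥ u' ⬝ᵥ X *ᵥ u') + b ^ 2 * (X *ᵥ v' ⬝ᵥ X *ᵥ v')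
        + 2 * (a * b) * (X *ᵥ u' ⬝ᵥ X *ᵥ v') := by
    simp only [sum_sq_eq_dotProduct_self, mulVec_add, mulVec_smul, add_dotProduct,
      dotProduct_add, smul_dotProduct, dotProduct_smul, smul_eq_mul,
      dotProduct_comm (X *ᵥ v') (X *ᵥ u')]
    ring
  have hplus := (hRIP b).2
  have hminus := (hRIP (-b)).1
  rw [hnorm, himage] at hplus hminus
  nlinarith

theorem abs_dotProduct_le (hX : X.IsRestrictedIsometry k δ) {S T : Finset ι}
    (hST : Disjoint S T) (hk : #S + #T ≤ k) (u v : ι → ℝ) :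
    |X *ᵥ (S : Set ι).indicator u ⬝ᵥ X *ᵥ (T : Set ι).indicator v|
      ≤ δ * √(∑ i ∈ S, u i ^ 2) * √(∑ i ∈ T, v i ^ 2) := by
  have hU := Real.sq_sqrt (sum_nonneg fun i (_ : i ∈ S) => sq_nonneg (u i))
  have hV := Real.sq_sqrt (sum_nonneg fun i (_ : i ∈ T) => sq_nonneg (v i))
  set a := √(∑ i ∈ S, u i ^ 2)
  set b := √(∑ i ∈ T, v i ^ 2)
  rcases (mul_nonneg (Real.sqrt_nonneg _) (Real.sqrt_nonneg _) : 0 ≤ a * b).eq_or_lt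
    with hab | hab
  · rcases mul_eq_zero.1 hab.symm with ha | hb
    · have : (S : Set ι).indicator u = 0 := by
        rw [← sum_sq_eq_zero_iff, S.sum_indicator_sq, ← hU, ha, sq, zero_mul]
      simp [this, ha]
    · have : (T : Set ι).indicator v = 0 := by
        rw [← sum_sq_eq_zero_iff, T.sum_indicator_sq, ← hV, hb, sq, zero_mul]
      simp [this, hb]
  have h₁ := hX.two_mul_mul_dotProduct_le hST hk u v b a
  have h₂ := hX.two_mul_mul_dotProduct_le hST hk u v b (-a)
  rw [← hU, ← hV] at h₁ h₂
  rw [abs_le]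
  constructor <;> nlinarith

theorem one_sub_mul_sum_sq_le_of_mulVec_eq_zero (hX : X.IsRestrictedIsometry (2 * s) δ)
    {h : ι → ℝ} (hXh : X *ᵥ h = 0) {T T₁ : Finset ι} (hTT₁ : Disjoint T T₁) (hT : #T ≤ s)
    (hT₁ : #T₁ ≤ s) {J : Finset ℕ} {B : ℕ → Finset ι} (hB : ∀ j ∈ J, #(B j) ≤ s)
    (hTB : ∀ j ∈ J, Disjoint T (B j)) (hT₁B : ∀ j ∈ J, Disjoint T₁ (B j))
    (hdecomp : h = (T : Set ι).indicator h + (T₁ : Set ι).indicator h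
      + ∑ j ∈ J, (B j : Set ι).indicator h) :
    (1 - δ) * (∑ i ∈ T, h i ^ 2 + ∑ i ∈ T₁, h i ^ 2)
      ≤ δ * (√(∑ i ∈ T, h i ^ 2) + √(∑ i ∈ T₁, h i ^ 2))
        * ∑ j ∈ J, √(∑ i ∈ B j, h i ^ 2) := by
  classical
  set z := (T : Set ι).indicator h + (T₁ : Set ι).indicator h
  have hz : z = ((T ∪ T₁ : Finset ι) : Set ι).indicator h := by
    rw [coe_union, Set.indicator_union_of_disjoint (disjoint_coe.2 hTT₁)]; rfl
  have hXz : X *ᵥ z = -∑ j ∈ J, X *ᵥ (B j : Set ι).indicator h := by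
    rw [eq_neg_iff_add_eq_zero, ← mulVec_sum, ← mulVec_add, ← hdecomp, hXh]
  have hlower : (1 - δ) * (∑ i ∈ T, h i ^ 2 + ∑ i ∈ T₁, h i ^ 2) ≤ ∑ i, (X *ᵥ z) i ^ 2 := by
    have := (hX _ ((card_indicator_ne_zero_le _ h).trans
      ((card_union_le T T₁).trans (by omega)))).1
    rwa [sum_indicator_sq, sum_union hTT₁, ← hz] at this
  refine hlower.trans ?_
  rw [sum_sq_eq_dotProduct_self]
  calc X *ᵥ z ⬝ᵥ X *ᵥ z
      = -∑ j ∈ J, (X *ᵥ (T : Set ι).indicator h ⬝ᵥ X *ᵥ (B j : Set ι).indicator h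
          + X *ᵥ (T₁ : Set ι).indicator h ⬝ᵥ X *ᵥ (B j : Set ι).indicator h) := by
        conv_lhs => arg 2; rw [hXz]
        simp only [dotProduct_neg, dotProduct_sum, z, mulVec_add, add_dotProduct]
    _ ≤ ∑ j ∈ J, (|X *ᵥ (T : Set ι).indicator h ⬝ᵥ X *ᵥ (B j : Set ι).indicator h|
          + |X *ᵥ (T₁ : Set ι).indicator h ⬝ᵥ X *ᵥ (B j : Set ι).indicator h|) := by
        rw [← sum_neg_distrib]
        exact sum_le_sum fun j _ => (neg_le_abs _).trans (abs_add_le _ _)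
    _ ≤ ∑ j ∈ J, (δ * √(∑ i ∈ T, h i ^ 2) * √(∑ i ∈ B j, h i ^ 2)
          + δ * √(∑ i ∈ T₁, h i ^ 2) * √(∑ i ∈ B j, h i ^ 2)) := by
        refine sum_le_sum fun j hj => add_le_add ?_ ?_
        · exact hX.abs_dotProduct_le (hTB j hj) (by linarith [hB j hj]) h h
        · exact hX.abs_dotProduct_le (hT₁B j hj) (by linarith [hB j hj]) h h
    _ = δ * (√(∑ i ∈ T, h i ^ 2) + √(∑ i ∈ T₁, h i ^ 2))
          * ∑ j ∈ J, √(∑ i ∈ B j, h i ^ 2) := by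
        rw [mul_sum]; exact sum_congr rfl fun j _ => by ring

theorem eq_zero_of_mulVec_eq_zero_of_sum_abs_compl_le [DecidableEq ι]
    (hX : X.IsRestrictedIsometry (2 * s) δ) (hδ : δ < √2 - 1) {h : ι → ℝ} (hXh : X *ᵥ h = 0)
    {T : Finset ι} (hT : #T ≤ s) (hcone : ∑ i ∈ Tᶜ, |h i| ≤ ∑ i ∈ T, |h i|) : h = 0 := by
  suffices hT0 : √(∑ i ∈ T, h i ^ 2) = 0 by
    have hT : ∑ i ∈ T, |h i| ≤ 0 := by
      simpa [hT0] using sum_abs_le_sqrt_mul_sqrt_sum_sq hT h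
    have hsum : ∑ i, |h i| ≤ 0 := by rw [← sum_add_sum_compl T]; linarith
    funext i
    exact abs_nonpos_iff.1 ((single_le_sum (fun i _ => abs_nonneg (h i)) (mem_univ i)).trans hsum)
  rcases Nat.eq_zero_or_pos s with rfl | hs
  · simp [card_eq_zero.1 (Nat.le_zero.1 hT)]
  obtain ⟨k, hk_card, hk_le⟩ := Tᶜ.exists_block_labeling (fun i => |h i|) hs
  set B : ℕ → Finset ι := fun j => {i ∈ Tᶜ | k i = j}
  set M := Tᶜ.sup k
  have hdecomp : h = (T : Set ι).indicator h + (B 0 : Set ι).indicator h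
      + ∑ j ∈ range M, (B (j + 1) : Set ι).indicator h := by
    have hfiber := Tᶜ.indicator_eq_sum_indicator_fiberwise (t := range (M + 1))
      (fun i hi => mem_range.2 (Nat.lt_succ_of_le (le_sup hi))) h
    rw [sum_range_succ', add_comm] at hfiber
    rw [add_assoc, ← hfiber, coe_compl, Set.indicator_self_add_compl]
  have hTB (j : ℕ) : Disjoint T (B j) :=
    disjoint_left.2 fun i hi hiB => mem_compl.1 (mem_filter.1 hiB).1 hi
  have hB₀B (j : ℕ) : Disjoint (B 0) (B (j + 1)) :=
    disjoint_filter.2 fun i _ h₀ h₁ => by omega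
  have hest := hX.one_sub_mul_sum_sq_le_of_mulVec_eq_zero hXh (hTB 0) hT (hk_card 0)
    (J := range M) (B := fun j => B (j + 1)) (fun j _ => hk_card _) (fun j _ => hTB _)
    (fun j _ => hB₀B j) hdecomp
  have htail : ∑ j ∈ range M, √(∑ i ∈ B (j + 1), h i ^ 2) ≤ √(∑ i ∈ T, h i ^ 2) :=
    le_of_mul_le_mul_left
      ((Tᶜ.sqrt_mul_sum_sqrt_sum_sq_le h hk_card hk_le M).trans
        (hcone.trans (sum_abs_le_sqrt_mul_sqrt_sum_sq hT h)))
      (Real.sqrt_pos.2 (Nat.cast_pos.2 hs))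
  refine eq_zero_of_one_sub_mul_le_of_lt_sqrt_two_sub_one (Real.sqrt_nonneg _)
    (Real.sqrt_nonneg (∑ i ∈ B 0, h i ^ 2)) (sum_nonneg fun _ _ => Real.sqrt_nonneg _) htail hδ ?_
  rwa [Real.sq_sqrt (sum_nonneg fun _ _ => sq_nonneg _),
    Real.sq_sqrt (sum_nonneg fun _ _ => sq_nonneg _)]

end Matrix.IsRestrictedIsometry

end

theorem basis_pursuit_exact_recovery_general
    (m p s : ℕ) (X : Matrix (Fin m) (Fin p) ℝ)
    (δ : ℝ) (hδ : δ < Real.sqrt 2 - 1)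
    (hRIP : ∀ z : Fin p → ℝ,
      (Finset.univ.filter (fun i => z i ≠ 0)).card ≤ 2 * s →
      (1 - δ) * ∑ i, z i ^ 2 ≤ ∑ i, (X.mulVec z i) ^ 2 ∧
        ∑ i, (X.mulVec z i) ^ 2 ≤ (1 + δ) * ∑ i, z i ^ 2)
    (α : Fin p → ℝ)
    (hα : (Finset.univ.filter (fun i => α i ≠ 0)).card ≤ s)
    (y : Fin m → ℝ) (hy : y = X.mulVec α) :
    ∀ z : Fin p → ℝ, X.mulVec z = y →
      (∑ i, |z i|) ≤ (∑ i, |α i|) → z = α := by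
  intro z hz hmin
  have hXh : X *ᵥ (z - α) = 0 := by rw [mulVec_sub, hz, hy, sub_self]
  have hcone := sum_abs_compl_le_of_sum_abs_add_le (T := {i | α i ≠ 0}) (h := z - α)
    (fun i hi => by simpa using hi) (by simpa using hmin)
  exact sub_eq_zero.1
    (IsRestrictedIsometry.eq_zero_of_mulVec_eq_zero_of_sum_abs_compl_le hRIP hδ hXh hα hcone)

theorem basis_pursuit_exact_recovery
    (m p s : ℕ) (X : Matrix (Fin m) (Fin p) ℝ)
    (δ : ℝ) (hδ0 : 0 < δ) (hδ : δ < Real.sqrt 2 - 1)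
    (hRIP : ∀ z : Fin p → ℝ,
      (Finset.univ.filter (fun i => z i ≠ 0)).card ≤ 2 * s →
      (1 - δ) * ∑ i, z i ^ 2 ≤ ∑ i, (X.mulVec z i) ^ 2 ∧
        ∑ i, (X.mulVec z i) ^ 2 ≤ (1 + δ) * ∑ i, z i ^ 2)
    (α : Fin p → ℝ)
    (hα : (Finset.univ.filter (fun i => α i ≠ 0)).card ≤ s)
    (y : Fin m → ℝ) (hy : y = X.mulVec α) :
    ∀ z : Fin p → ℝ, X.mulVec z = y →
      (∑ i, |z i|) ≤ (∑ i, |α i|) → z = α :=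
  basis_pursuit_exact_recovery_general m p s X δ hδ hRIP α hα y hy
end

section
/- Let v[k] ∈ [0,1]^N satisfy the discrete-time NIMFA equations v_i[k+1] = (1−δ_T)v_i[k] + β_T(1−v_i[k])Σⱼ a_{ij} v_j[k] with β_T ≥ 0, δ_T ∈ [0,1], and a_{ij} ≥ 0. If additionally δ_T + β_T d_i ≤ 1 for all i with d_i = Σⱼ a_{ij}, then v_i[k+1] ∈ [0,1] for all i whenever v_j[k] ∈ [0,1] for all j; i.e., the unit cube [0,1]^N is positively invariant. -/
open Finset

theorem sum_mul_mem_Icc_of_mem_Icc {ι : Type*} (s : Finset ι) {a v : ι → ℝ}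
    (ha : ∀ j ∈ s, 0 ≤ a j) (hv : ∀ j ∈ s, v j ∈ Set.Icc (0 : ℝ) 1) :
    ∑ j ∈ s, a j * v j ∈ Set.Icc 0 (∑ j ∈ s, a j) :=
  ⟨sum_nonneg fun j hj => mul_nonneg (ha j hj) (hv j hj).1,
    sum_le_sum fun j hj => mul_le_of_le_one_right (ha j hj) (hv j hj).2⟩

theorem nimfa_update_mem_Icc {β δ d x s : ℝ} (hβ : 0 ≤ β) (hδ : 0 ≤ δ)
    (hβδ : δ + β * d ≤ 1) (hx : x ∈ Set.Icc (0 : ℝ) 1) (hs : s ∈ Set.Icc 0 d) :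
    (1 - δ) * x + β * (1 - x) * s ∈ Set.Icc (0 : ℝ) 1 := by
  obtain ⟨hx0, hx1⟩ := hx
  obtain ⟨hs0, hsd⟩ := hs
  have hβs : β * s ≤ 1 - δ := by nlinarith [mul_le_mul_of_nonneg_left hsd hβ]
  constructor
  · have : 0 ≤ 1 - δ := le_trans (mul_nonneg hβ hs0) hβs
    positivity [sub_nonneg.2 hx1]
  · calc (1 - δ) * x + β * (1 - x) * s
        = (1 - δ) * x + (1 - x) * (β * s) := by ring
      _ ≤ (1 - δ) * x + (1 - x) * (1 - δ) := by gcongr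
      _ = 1 - δ := by ring
      _ ≤ 1 := by linarith

theorem nimfa_unit_cube_invariant_general
    (N : ℕ) (a : Fin N → Fin N → ℝ) (ha : ∀ i j, 0 ≤ a i j)
    (βT δT : ℝ) (hβ : 0 ≤ βT) (hδ0 : 0 ≤ δT)
    (hT : ∀ i, δT + βT * ∑ j, a i j ≤ 1)
    (v : ℕ → Fin N → ℝ)
    (hv : ∀ k i, v (k + 1) i = (1 - δT) * v k i
      + βT * (1 - v k i) * ∑ j, a i j * v k j) :
    ∀ k, (∀ j, v k j ∈ Set.Icc (0 : ℝ) 1) →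
      ∀ i, v (k + 1) i ∈ Set.Icc (0 : ℝ) 1 := by
  intro k hk i
  rw [hv]
  exact nimfa_update_mem_Icc hβ hδ0 (hT i) (hk i)
    (sum_mul_mem_Icc_of_mem_Icc univ (fun j _ => ha i j) fun j _ => hk j)

theorem nimfa_unit_cube_invariant
    (N : ℕ) (a : Fin N → Fin N → ℝ) (ha : ∀ i j, 0 ≤ a i j)
    (βT δT : ℝ) (hβ : 0 ≤ βT) (hδ0 : 0 ≤ δT) (hδ1 : δT ≤ 1)
    (hT : ∀ i, δT + βT * ∑ j, a i j ≤ 1)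
    (v : ℕ → Fin N → ℝ)
    (hv : ∀ k i, v (k + 1) i = (1 - δT) * v k i
      + βT * (1 - v k i) * ∑ j, a i j * v k j) :
    ∀ k, (∀ j, v k j ∈ Set.Icc (0 : ℝ) 1) →
      ∀ i, v (k + 1) i ∈ Set.Icc (0 : ℝ) 1 :=
  nimfa_unit_cube_invariant_general N a ha βT δT hβ hδ0 hT v hv
end

section
/- If the n×N viral state matrix V satisfies rank(V) < (N−1)/2, then the matrix M = (I_N ⊗ V, C_vec)·blockdiag(Π_N, 1) of size nN × (L_max+1), with L_max = N(N−1)/2, does not have full column rank; consequently the linear system B_vec = M(wᵀ, δ_T)ᵀ does not have a unique solution for (w, δ_T). -/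
open Matrix Kronecker

/-!
The image of `I_N ⊗ V` lies in the `N`-fold direct sum of the column space of `V`, so
`rank M ≤ N · rank V + 1` (right multiplication by `Π_N` cannot raise the rank, and `C_vec` adds one
column). When `2 rank V + 1 < N` this is smaller than `N(N-1)/2 + 1`, the number of columns of `M`,
so `M` has a nontrivial kernel and two distinct preimages of the same vector.
-/

namespace Matrix

variable {K : Type*} [Field K] {ι m n p : Type*}

theorem rank_fromCols_le [Fintype m] [Fintype n] [Fintype p] (A : Matrix m n K)
    (B : Matrix m p K) : (fromCols A B).rank ≤ A.rank + B.rank := by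
  have hrange : LinearMap.range (fromCols A B).mulVecLin ≤
      LinearMap.range A.mulVecLin ⊔ LinearMap.range B.mulVecLin := by
    rintro _ ⟨v, rfl⟩
    rw [mulVecLin_apply, fromCols_mulVec]
    exact Submodule.add_mem_sup (LinearMap.mem_range_self A.mulVecLin _)
      (LinearMap.mem_range_self B.mulVecLin _)
  exact (Submodule.finrank_mono hrange).trans
    (Submodule.finrank_add_le_finrank_add_finrank _ _)

theorem one_kronecker_mulVec_apply [Fintype ι] [DecidableEq ι] [Fintype n] (V : Matrix m n K)
    (x : ι × n → K) (i : ι) (k : m) :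
    ((1 : Matrix ι ι K) ⊗ₖ V *ᵥ x) (i, k) = (V *ᵥ fun l => x (i, l)) k := by
  simp [mulVec, dotProduct, Fintype.sum_prod_type, one_apply, ite_mul, Finset.sum_ite_eq]

theorem rank_one_kronecker_le [Fintype ι] [DecidableEq ι] [Fintype m] [Fintype n]
    (V : Matrix m n K) : ((1 : Matrix ι ι K) ⊗ₖ V).rank ≤ Fintype.card ι * V.rank := by
  let R := LinearMap.range V.mulVecLin
  let blocks : (ι → R) →ₗ[K] (ι × m → K) :=
    LinearMap.pi fun q => (LinearMap.proj q.2).comp (R.subtype.comp (LinearMap.proj q.1))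
  have hrange : LinearMap.range ((1 : Matrix ι ι K) ⊗ₖ V).mulVecLin ≤ LinearMap.range blocks := by
    rintro _ ⟨x, rfl⟩
    refine ⟨fun i => ⟨V *ᵥ fun l => x (i, l), LinearMap.mem_range_self V.mulVecLin _⟩, ?_⟩
    ext ⟨i, k⟩
    simp [blocks, one_kronecker_mulVec_apply]
  calc ((1 : Matrix ι ι K) ⊗ₖ V).rank ≤ Module.finrank K (ι → R) :=
        (Submodule.finrank_mono hrange).trans (LinearMap.finrank_range_le _)
    _ = Fintype.card ι * V.rank := by simp [Module.finrank_pi_fintype, rank, R]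

theorem exists_ne_mulVec_eq_of_rank_lt [Fintype n] (A : Matrix m n K)
    (h : A.rank < Fintype.card n) : ∃ v w : n → K, v ≠ w ∧ A *ᵥ v = A *ᵥ w := by
  have hinj : ¬Function.Injective A.mulVecLin := fun hinj => h.ne <| by
    rw [rank, LinearMap.finrank_range_of_inj hinj, Module.finrank_fintype_fun_eq_card]
  obtain ⟨v, w, hvw, hne⟩ := Function.not_injective_iff.mp hinj
  exact ⟨v, w, hne, hvw⟩

end Matrix

theorem Nat.mul_lt_mul_sub_one_div_two {N r : ℕ} (h : 2 * r + 1 < N) :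
    N * r < N * (N - 1) / 2 := by
  obtain ⟨k, rfl⟩ : ∃ k, N = 2 * r + 2 + k := ⟨N - (2 * r + 2), by omega⟩
  rw [Nat.lt_iff_add_one_le, Nat.le_div_iff_mul_le two_pos,
    show 2 * r + 2 + k - 1 = 2 * r + 1 + k by omega]
  nlinarith

theorem nimfa_no_unique_solution_of_low_rank_general
    (n N : ℕ)
    (V : Matrix (Fin n) (Fin N) ℝ)
    (Pm : Matrix (Fin N × Fin N) (Fin (N * (N - 1) / 2)) ℝ)
    (Cvec : Fin N × Fin n → ℝ)
    (M : Matrix (Fin N × Fin n) (Fin (N * (N - 1) / 2) ⊕ Unit) ℝ)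
    (hM : M = Matrix.fromCols
      (((1 : Matrix (Fin N) (Fin N) ℝ) ⊗ₖ V) * Pm)
      (Matrix.replicateCol Unit Cvec))
    (hrank : (V.rank : ℝ) < ((N : ℝ) - 1) / 2) :
    M.rank < N * (N - 1) / 2 + 1 ∧
      ∃ w₁ w₂ : Fin (N * (N - 1) / 2) ⊕ Unit → ℝ,
        w₁ ≠ w₂ ∧ M.mulVec w₁ = M.mulVec w₂ := by
  have hV : 2 * V.rank + 1 < N := by
    rw [lt_div_iff₀ two_pos] at hrank
    exact_mod_cast (by push_cast; linarith : ((2 * V.rank + 1 : ℕ) : ℝ) < N)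
  have hM_rank : M.rank ≤ N * V.rank + 1 := by
    subst hM
    calc _ ≤ ((1 : Matrix (Fin N) (Fin N) ℝ) ⊗ₖ V * Pm).rank + (replicateCol Unit Cvec).rank :=
          rank_fromCols_le _ _
      _ ≤ ((1 : Matrix (Fin N) (Fin N) ℝ) ⊗ₖ V).rank + Fintype.card Unit :=
          add_le_add (rank_mul_le_left _ _) (rank_le_card_width _)
      _ ≤ N * V.rank + 1 := by
          simpa using rank_one_kronecker_le (ι := Fin N) V
  have hlt : M.rank < N * (N - 1) / 2 + 1 := by
    have := Nat.mul_lt_mul_sub_one_div_two hV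
    omega
  refine ⟨hlt, M.exists_ne_mulVec_eq_of_rank_lt ?_⟩
  simpa using hlt

theorem nimfa_no_unique_solution_of_low_rank
    (n N : ℕ)
    (V C : Matrix (Fin n) (Fin N) ℝ)
    (Pm : Matrix (Fin N × Fin N) (Fin (N * (N - 1) / 2)) ℝ)
    (Cvec : Fin N × Fin n → ℝ) (hCvec : ∀ i k, Cvec (i, k) = C k i)
    (M : Matrix (Fin N × Fin n) (Fin (N * (N - 1) / 2) ⊕ Unit) ℝ)
    (hM : M = Matrix.fromCols
      (((1 : Matrix (Fin N) (Fin N) ℝ) ⊗ₖ V) * Pm)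
      (Matrix.replicateCol Unit Cvec))
    (hrank : (V.rank : ℝ) < ((N : ℝ) - 1) / 2) :
    M.rank < N * (N - 1) / 2 + 1 ∧
      ∃ w₁ w₂ : Fin (N * (N - 1) / 2) ⊕ Unit → ℝ,
        w₁ ≠ w₂ ∧ M.mulVec w₁ = M.mulVec w₂ :=
  nimfa_no_unique_solution_of_low_rank_general n N V Pm Cvec M hM hrank
end
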